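/- The multiclass Littlestone dimension of the class of bijections from {1,...,n} to {1,...,n} (viewed as a hypothesis class mapping contexts {1,...,n} to labels {1,...,n}) is exactly n-1. -/

import Mathlib

/-!
For the lower bound, among the bijections that agree with a fixed bijection `e` off a set `S`
of free points, querying a free point `z₁` can be answered either by `e z₁` or by `e z₂` for
another free point `z₂` (composing `e` with the transposition of `z₁` and `z₂`); each answer
freezes `z₁` only, so the tree has depth `#S - 1`.

For the upper bound, a family of bijections on which two members differ at some point differs
at two points, and every query of a shattered tree freezes one more point of disagreement; so a
tree of depth `d + 1` needs `d + 2` points of disagreement, whence `d + 1 ≤ n - 1`.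
-/

/-- Multiclass Littlestone shattering: `MShatters H d` says there is a full
binary multiclass Littlestone tree of depth `d` (each internal node labeled by a
context, with two outgoing edges carrying distinct labels) shattered by `H`. -/
def MShatters {Z K : Type*} (H : Set (Z → K)) : ℕ → Prop
  | 0 => H.Nonempty
  | d + 1 => ∃ z : Z, ∃ k₁ k₂ : K, k₁ ≠ k₂ ∧
      MShatters {h ∈ H | h z = k₁} d ∧ MShatters {h ∈ H | h z = k₂} d

open Set Function

variable {Z K : Type*}

theorem MShatters.nonempty : ∀ {d : ℕ} {H : Set (Z → K)}, MShatters H d → H.Nonempty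
  | 0, _, hH => hH
  | _ + 1, _, ⟨_, _, _, _, hH₁, _⟩ => hH₁.nonempty.mono (sep_subset _ _)

theorem MShatters.mono :
    ∀ {d : ℕ} {H H' : Set (Z → K)}, MShatters H d → H ⊆ H' → MShatters H' d
  | 0, _, _, hH, hHH' => Set.Nonempty.mono hHH' hH
  | _ + 1, _, _, ⟨z, k₁, k₂, hk, hH₁, hH₂⟩, hHH' =>
    ⟨z, k₁, k₂, hk, hH₁.mono fun _ hh => ⟨hHH' hh.1, hh.2⟩,
      hH₂.mono fun _ hh => ⟨hHH' hh.1, hh.2⟩⟩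

theorem bijective_eqOn_sdiff_singleton_subset {e e' : Z ≃ K} {S : Set Z} (z : Z)
    (he' : EqOn e' e Sᶜ) :
    {h : Z → K | Bijective h ∧ EqOn h e' (S \ {z})ᶜ} ⊆
      {h ∈ {h : Z → K | Bijective h ∧ EqOn h e Sᶜ} | h z = e' z} := by
  rintro h ⟨hbij, heq⟩
  rw [compl_sdiff, eqOn_union, eqOn_singleton] at heq
  exact ⟨⟨hbij, heq.2.trans he'⟩, heq.1⟩

theorem mshatters_bijective_eqOn_compl [DecidableEq Z] (e : Z ≃ K) :
    ∀ (d : ℕ) (S : Set Z), d < S.ncard →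
      MShatters {h : Z → K | Bijective h ∧ EqOn h e Sᶜ} d
  | 0, _, _ => ⟨e, e.bijective, fun _ _ => rfl⟩
  | d + 1, S, hd => by
    obtain ⟨z₁, hz₁, z₂, hz₂, hz⟩ :=
      ((one_lt_ncard_iff_nontrivial_and_finite (s := S)).1 (by omega)).1
    have hS : d < (S \ {z₁}).ncard := by rw [ncard_sdiff_singleton_of_mem hz₁]; omega
    have hswap : EqOn ((Equiv.swap z₁ z₂).trans e) e Sᶜ := fun z hzS => by
      rw [Equiv.trans_apply, Equiv.swap_apply_of_ne_of_ne (ne_of_mem_of_not_mem hz₁ hzS).symm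
        (ne_of_mem_of_not_mem hz₂ hzS).symm]
    refine ⟨z₁, e z₁, e z₂, e.injective.ne hz, ?_, ?_⟩
    · exact (mshatters_bijective_eqOn_compl e d _ hS).mono
        (bijective_eqOn_sdiff_singleton_subset z₁ (eqOn_refl _ _))
    · simpa using (mshatters_bijective_eqOn_compl _ d _ hS).mono
        (bijective_eqOn_sdiff_singleton_subset z₁ hswap)

def disagreementSet (H : Set (Z → K)) : Set Z := {z | ∃ h ∈ H, ∃ h' ∈ H, h z ≠ h' z}

theorem disagreementSet_mono {H H' : Set (Z → K)} (hHH' : H ⊆ H') :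
    disagreementSet H ⊆ disagreementSet H' := fun _ ⟨h, hh, h', hh', hne⟩ =>
  ⟨h, hHH' hh, h', hHH' hh', hne⟩

theorem notMem_disagreementSet_sep_apply_eq (H : Set (Z → K)) (z : Z) (k : K) :
    z ∉ disagreementSet {h ∈ H | h z = k} := fun ⟨_, hh, _, hh', hne⟩ =>
  hne (hh.2.trans hh'.2.symm)

theorem exists_ne_apply_ne_of_apply_ne {f g : Z → K} (hf : Surjective f) (hg : Injective g)
    {z : Z} (hz : f z ≠ g z) : ∃ w ≠ z, f w ≠ g w := by
  obtain ⟨w, hw⟩ := hf (g z)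
  refine ⟨w, ?_, ?_⟩
  · rintro rfl
    exact hz hw
  · rw [hw]
    exact fun hzw => hz (hw ▸ congrArg f (hg hzw))

theorem MShatters.add_two_le_ncard_disagreementSet [Finite Z] :
    ∀ {d : ℕ} {H : Set (Z → K)}, (∀ h ∈ H, Bijective h) → MShatters H (d + 1) →
      d + 2 ≤ (disagreementSet H).ncard
  | 0, H, hH, ⟨z, k₁, k₂, hk, hH₁, hH₂⟩ => by
    obtain ⟨h₁, hh₁, rfl⟩ := hH₁.nonempty
    obtain ⟨h₂, hh₂, rfl⟩ := hH₂.nonempty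
    obtain ⟨w, hwz, hw⟩ := exists_ne_apply_ne_of_apply_ne (hH h₁ hh₁).2 (hH h₂ hh₂).1 hk
    calc 0 + 2 = ({z, w} : Set Z).ncard := (ncard_pair hwz.symm).symm
      _ ≤ (disagreementSet H).ncard :=
        ncard_le_ncard <| pair_subset ⟨h₁, hh₁, h₂, hh₂, hk⟩ ⟨h₁, hh₁, h₂, hh₂, hw⟩
  | d + 1, H, hH, ⟨z, k₁, k₂, hk, hH₁, hH₂⟩ => by
    obtain ⟨h₁, hh₁, rfl⟩ := hH₁.nonempty
    obtain ⟨h₂, hh₂, rfl⟩ := hH₂.nonempty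
    have hz : insert z (disagreementSet {h ∈ H | h z = h₁ z}) ⊆ disagreementSet H :=
      insert_subset ⟨h₁, hh₁, h₂, hh₂, hk⟩ (disagreementSet_mono (sep_subset _ _))
    calc d + 1 + 2 ≤ (disagreementSet {h ∈ H | h z = h₁ z}).ncard + 1 :=
          Nat.add_le_add_right (hH₁.add_two_le_ncard_disagreementSet fun h hh => hH h hh.1) 1
      _ = (insert z (disagreementSet {h ∈ H | h z = h₁ z})).ncard :=
          (ncard_insert_of_notMem (notMem_disagreementSet_sep_apply_eq H z _)).symm
      _ ≤ (disagreementSet H).ncard := ncard_le_ncard hz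

/-- The multiclass Littlestone dimension of the class of bijections
(permutations) of `{1,...,n}` is exactly `n - 1`. -/
theorem stmt0 (n : ℕ) (hn : 1 ≤ n) :
    IsGreatest {d : ℕ | MShatters {h : Fin n → Fin n | Function.Bijective h} d} (n - 1) := by
  constructor
  · have hn' : n - 1 < (univ : Set (Fin n)).ncard := by
      rw [ncard_univ, Nat.card_fin]; omega
    exact (mshatters_bijective_eqOn_compl (Equiv.refl _) (n - 1) univ hn').mono fun _ hh => hh.1
  · rintro (_ | d) hd
    · exact Nat.zero_le _
    · have hdisagree :=
        hd.add_two_le_ncard_disagreementSet (H := {h : Fin n → Fin n | Bijective h}) fun _ hh => hh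
      have hcard := ncard_le_card (disagreementSet {h : Fin n → Fin n | Bijective h})
      rw [Nat.card_fin] at hcard
      omega
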